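/- arXiv:2212.00261 — 2 statements merged into one kernel-verified Lean document; each statement's English description precedes it below -/
import Mathlib

section
/- (Proposition 1, Agreement Score bounds test accuracy) Let X be a nonempty finite set and P a probability mass function on classifiers g : X → Bool. Then for every majority-vote labeling ĥ : X → Bool and every labeling h : X → Bool, the inequalities ACC(ĥ) ≥ AS and AS ≥ 2·ACC(h) − 1 hold. -/
open scoped BigOperators

/-- Test accuracy of labeling `h` under classifier distribution `P`. -/
noncomputable def ACC {X : Type*} [Fintype X] [DecidableEq X]
    (P : PMF (X → Bool)) (h : X → Bool) : ℝ :=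
  ∑ g : X → Bool, (P g).toReal *
    ((1 / (Fintype.card X : ℝ)) * ∑ x : X, if g x = h x then (1 : ℝ) else 0)

/-- Agreement score: expected agreement of two independent classifiers from `P`. -/
noncomputable def AS {X : Type*} [Fintype X] [DecidableEq X]
    (P : PMF (X → Bool)) : ℝ :=
  ∑ g₁ : X → Bool, ∑ g₂ : X → Bool, (P g₁).toReal * (P g₂).toReal *
    ((1 / (Fintype.card X : ℝ)) * ∑ x : X, if g₁ x = g₂ x then (1 : ℝ) else 0)

/-- The probability that a classifier drawn from `P` labels `x` with `c`. -/
noncomputable def probAt {X : Type*} [Fintype X] [DecidableEq X]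
    (P : PMF (X → Bool)) (x : X) (c : Bool) : ℝ :=
  ∑ g : X → Bool, if g x = c then (P g).toReal else 0

/-- `hmv` is a majority-vote labeling for `P`. -/
def IsMajorityVote {X : Type*} [Fintype X] [DecidableEq X]
    (P : PMF (X → Bool)) (hmv : X → Bool) : Prop :=
  ∀ (x : X) (c : Bool), probAt P x c ≤ probAt P x (hmv x)

section Aux

variable {X : Type*} [Fintype X] [DecidableEq X] (P : PMF (X → Bool))

lemma sum_toReal_eq_one : ∑ g : X → Bool, (P g).toReal = 1 := by
  have h := P.tsum_coe
  rw [tsum_fintype] at h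
  have h2 : (∑ g : X → Bool, P g).toReal = (1 : ENNReal).toReal := by rw [h]
  rwa [ENNReal.toReal_sum (fun g _ => P.apply_ne_top g), ENNReal.toReal_one] at h2

lemma probAt_nonneg (x : X) (c : Bool) : 0 ≤ probAt P x c := by
  apply Finset.sum_nonneg
  intro g _
  split <;> positivity

lemma probAt_add (x : X) : probAt P x true + probAt P x false = 1 := by
  rw [probAt, probAt, ← Finset.sum_add_distrib, ← sum_toReal_eq_one P]
  apply Finset.sum_congr rfl
  intro g _
  cases hg : g x <;> simp [hg]

lemma ACC_eq (h : X → Bool) :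
    ACC P h = (1 / (Fintype.card X : ℝ)) * ∑ x : X, probAt P x (h x) := by
  rw [ACC, Finset.mul_sum]
  simp only [Finset.mul_sum, mul_ite, mul_one, mul_zero]
  rw [Finset.sum_comm]
  apply Finset.sum_congr rfl
  intro x _
  rw [probAt, Finset.mul_sum]
  apply Finset.sum_congr rfl
  intro g _
  split <;> ring

lemma AS_eq :
    AS P = (1 / (Fintype.card X : ℝ)) *
      ∑ x : X, ((probAt P x true) ^ 2 + (probAt P x false) ^ 2) := by
  have step1 : AS P = (1 / (Fintype.card X : ℝ)) * ∑ g₁ : X → Bool, ∑ g₂ : X → Bool,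
      ∑ x : X, (P g₁).toReal * (P g₂).toReal * (if g₁ x = g₂ x then (1 : ℝ) else 0) := by
    rw [AS, Finset.mul_sum]
    apply Finset.sum_congr rfl
    intro g₁ _
    rw [Finset.mul_sum]
    apply Finset.sum_congr rfl
    intro g₂ _
    rw [Finset.mul_sum]
    simp only [Finset.mul_sum]
    apply Finset.sum_congr rfl
    intro x _
    ring
  rw [step1]
  congr 1
  rw [Finset.sum_congr rfl (fun g₁ _ => Finset.sum_comm), Finset.sum_comm]
  apply Finset.sum_congr rfl
  intro x _
  have step : ∀ g₁ : X → Bool,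
      ∑ g₂ : X → Bool, (P g₁).toReal * (P g₂).toReal *
        (if g₁ x = g₂ x then (1 : ℝ) else 0) = (P g₁).toReal * probAt P x (g₁ x) := by
    intro g₁
    rw [probAt, Finset.mul_sum]
    apply Finset.sum_congr rfl
    intro g₂ _
    rcases eq_or_ne (g₂ x) (g₁ x) with he | he
    · simp [he]
    · simp [he, Ne.symm he]
  rw [Finset.sum_congr rfl (fun g₁ _ => step g₁)]
  have split : ∀ g : X → Bool, (P g).toReal * probAt P x (g x) =
      (if g x = true then (P g).toReal else 0) * probAt P x true +
      (if g x = false then (P g).toReal else 0) * probAt P x false := by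
    intro g
    cases hg : g x <;> simp [hg]
  rw [Finset.sum_congr rfl (fun g _ => split g), Finset.sum_add_distrib,
    ← Finset.sum_mul, ← Finset.sum_mul, ← probAt, ← probAt]
  ring

end Aux

/-- Proposition 1: the agreement score is sandwiched between the accuracy of the
majority-vote labeling and `2·ACC(h) − 1` for any labeling `h`. -/
theorem agreement_score_bounds_test_accuracy
    {X : Type*} [Fintype X] [DecidableEq X] [Nonempty X]
    (P : PMF (X → Bool)) (hmv h : X → Bool) (hmaj : IsMajorityVote P hmv) :
    AS P ≤ ACC P hmv ∧ 2 * ACC P h - 1 ≤ AS P := by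
  have hN : (0 : ℝ) < (Fintype.card X : ℝ) := by
    exact_mod_cast Fintype.card_pos
  have hc : (0 : ℝ) ≤ 1 / (Fintype.card X : ℝ) := by positivity
  have key : ∀ (x : X) (f : X → Bool),
      2 * probAt P x (f x) - 1 ≤ probAt P x true ^ 2 + probAt P x false ^ 2 ∧
      probAt P x true ^ 2 + probAt P x false ^ 2 ≤ probAt P x (hmv x) := by
    intro x f
    have hp := probAt_nonneg P x true
    have hq := probAt_nonneg P x false
    have hs := probAt_add P x
    have hm1 := hmaj x true
    have hm2 := hmaj x false
    constructor
    · cases hf : f x <;> nlinarith [sq_nonneg (probAt P x true - 1),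
        sq_nonneg (probAt P x false - 1)]
    · nlinarith
  constructor
  · rw [AS_eq, ACC_eq]
    apply mul_le_mul_of_nonneg_left _ hc
    exact Finset.sum_le_sum fun x _ => (key x hmv).2
  · rw [AS_eq, ACC_eq]
    have h1 : (2 : ℝ) * ((1 / (Fintype.card X : ℝ)) * ∑ x : X, probAt P x (h x)) - 1 =
        (1 / (Fintype.card X : ℝ)) * ∑ x : X, (2 * probAt P x (h x) - 1) := by
      rw [Finset.sum_sub_distrib, Finset.sum_const, ← Finset.mul_sum,
        Finset.card_univ, nsmul_eq_mul, mul_one, mul_sub]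
      congr 1
      · ring
      · field_simp
    rw [h1]
    apply mul_le_mul_of_nonneg_left _ hc
    exact Finset.sum_le_sum fun x _ => (key x h).1
end

section
/- (Proposition 1, first inequality) Let X be a nonempty finite set and P a probability mass function on classifiers g : X → Bool. Then for every majority-vote labeling ĥ : X → Bool, ACC(ĥ) ≥ AS; i.e., the test accuracy of the majority-vote labeling is at least the agreement score. -/
open scoped BigOperators

/-- Proposition 1, first inequality: `ACC(hmv) ≥ AS` for a majority-vote labeling `hmv`. -/
theorem majority_vote_accuracy_ge_agreement_score
    {X : Type*} [Fintype X] [DecidableEq X] [Nonempty X]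
    (P : PMF (X → Bool)) (hmv : X → Bool) (hmaj : IsMajorityVote P hmv) :
    AS P ≤ ACC P hmv := by
  classical
  set n : ℝ := (Fintype.card X : ℝ) with hn
  have hnpos : (0:ℝ) < n := by
    simp only [hn]; exact_mod_cast Fintype.card_pos
  have hsum1 : ∀ x : X, probAt P x true + probAt P x false = 1 := by
    intro x
    unfold probAt
    rw [← Finset.sum_add_distrib]
    have h1 : ∀ g : X → Bool, ((if g x = true then (P g).toReal else 0) +
        (if g x = false then (P g).toReal else 0)) = (P g).toReal := by
      intro g; cases h : g x <;> simp [h]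
    simp only [h1]
    have htc := P.tsum_coe
    rw [tsum_eq_sum (s := Finset.univ) (by simp)] at htc
    have h2 : (∑ g : X → Bool, P g).toReal = 1 := by rw [htc]; simp
    rw [ENNReal.toReal_sum] at h2
    · exact h2
    · intro g _
      exact ne_of_lt (lt_of_le_of_lt (PMF.coe_le_one P g) (by simp))
  have hnonneg : ∀ (x : X) (c : Bool), 0 ≤ probAt P x c := by
    intro x c
    apply Finset.sum_nonneg; intro g _; positivity
  have hACC : ACC P hmv = (1/n) * ∑ x : X, probAt P x (hmv x) := by
    unfold ACC probAt
    simp only [Finset.mul_sum]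
    rw [Finset.sum_comm]
    apply Finset.sum_congr rfl
    intro x _
    apply Finset.sum_congr rfl
    intro g _
    by_cases h : g x = hmv x <;> simp [h] <;> ring
  have key : ∀ x : X, (∑ g₁ : X → Bool, ∑ g₂ : X → Bool,
      (P g₁).toReal * (P g₂).toReal * (if g₁ x = g₂ x then (1:ℝ) else 0))
      = probAt P x true * probAt P x true + probAt P x false * probAt P x false := by
    intro x
    unfold probAt
    rw [Finset.sum_mul_sum, Finset.sum_mul_sum, ← Finset.sum_add_distrib]
    apply Finset.sum_congr rfl
    intro g₁ _
    rw [← Finset.sum_add_distrib]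
    apply Finset.sum_congr rfl
    intro g₂ _
    cases h1 : g₁ x <;> cases h2 : g₂ x <;> simp [h1, h2]
  have hAS : AS P = (1/n) * ∑ x : X,
      (probAt P x true * probAt P x true + probAt P x false * probAt P x false) := by
    unfold AS
    have h12 : ∀ g₁ g₂ : X → Bool, (P g₁).toReal * (P g₂).toReal *
        ((1 / n) * ∑ x : X, if g₁ x = g₂ x then (1 : ℝ) else 0)
        = (1/n) * ∑ x : X,
          (P g₁).toReal * (P g₂).toReal * (if g₁ x = g₂ x then (1:ℝ) else 0) := by
      intro g₁ g₂
      rw [← Finset.mul_sum]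
      ring
    simp only [hn] at h12 ⊢
    simp only [h12]
    have pull1 : ∀ g₁ : X → Bool,
        (∑ g₂ : X → Bool, (1/(Fintype.card X : ℝ)) * ∑ x : X,
          (P g₁).toReal * (P g₂).toReal * (if g₁ x = g₂ x then (1:ℝ) else 0))
        = (1/(Fintype.card X : ℝ)) * ∑ g₂ : X → Bool, ∑ x : X,
          (P g₁).toReal * (P g₂).toReal * (if g₁ x = g₂ x then (1:ℝ) else 0) :=
      fun g₁ => (Finset.mul_sum _ _ _).symm
    simp only [pull1]
    rw [← Finset.mul_sum]
    congr 1
    have step : ∀ g₁ : X → Bool,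
        (∑ g₂ : X → Bool, ∑ x : X, (P g₁).toReal * (P g₂).toReal * (if g₁ x = g₂ x then (1:ℝ) else 0))
        = ∑ x : X, ∑ g₂ : X → Bool, (P g₁).toReal * (P g₂).toReal * (if g₁ x = g₂ x then (1:ℝ) else 0) :=
      fun _ => Finset.sum_comm
    simp only [step]
    rw [Finset.sum_comm]
    exact Finset.sum_congr rfl fun x _ => key x
  rw [hACC, hAS]
  apply mul_le_mul_of_nonneg_left _ (by positivity)
  apply Finset.sum_le_sum
  intro x _
  have h1 := hmaj x true
  have h2 := hmaj x false
  have h3 := hsum1 x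
  nlinarith [hnonneg x true, hnonneg x false]
end
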